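/- arXiv:2403.10121 — 2 statements merged into one kernel-verified Lean document; each statement's English description precedes it below -/
import Mathlib

section
/- Let φ₁ : V₁ → U₁ ∩ M and φ₂ : V₂ → U₂ ∩ M be two local C^k-parametrizations of an m-dimensional C^k-submanifold M of a Banach space W with X := U₁ ∩ U₂ ∩ M nonempty. Then the transition map φ := φ₁⁻¹ ∘ φ₂ : φ₂⁻¹(X) → φ₁⁻¹(X) is a C^k-diffeomorphism between open subsets of ℝ^m. -/
/-!
Near a point of `φ₂⁻¹(X)`, the transition map `ψ₁ ∘ φ₂` is the unique continuous solution `g` of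
`φ₁ ∘ g = φ₂`. Since `Dφ₁` is injective with finite-dimensional source it has a continuous left
inverse `π`, so `π ∘ φ₁` is a local `C^k`-diffeomorphism by the inverse function theorem, and
`g = (π ∘ φ₁)⁻¹ ∘ π ∘ φ₂` near the point, by continuity of `g`. The same holds with the two
parametrizations swapped, and the set-theoretic bijection is formal.
-/

open Function Set Filter Topology

namespace ContinuousLinearMap.HasLeftInverse

variable {𝕜 E F : Type*} [RCLike 𝕜] [NormedAddCommGroup E] [NormedSpace 𝕜 E]
  [FiniteDimensional 𝕜 E] [NormedAddCommGroup F] [NormedSpace 𝕜 F]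

lemma of_injective_of_finiteDimensional_domain {f : E →L[𝕜] F} (hf : Injective f) :
    f.HasLeftInverse := by
  obtain ⟨p, hp⟩ := Submodule.ClosedComplemented.of_finiteDimensional f.range
  have hsubtype : f.range.subtypeL.HasLeftInverse := ⟨p, fun x => hp x⟩
  have hrestrict : f.rangeRestrict.HasLeftInverse :=
    of_injective_of_finiteDimensional fun x y hxy => hf (congrArg Subtype.val hxy)
  exact hsubtype.comp hrestrict

end ContinuousLinearMap.HasLeftInverse

section Immersion

variable {𝕜 E F G : Type*} [RCLike 𝕜] [NormedAddCommGroup E] [NormedSpace 𝕜 E]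
  [FiniteDimensional 𝕜 E] [NormedAddCommGroup F] [NormedSpace 𝕜 F]
  [NormedAddCommGroup G] [NormedSpace 𝕜 G] {n : WithTop ℕ∞}

lemma ContDiffAt.exists_eventually_leftInverse_of_injective_fderiv {φ : E → F} {a : E}
    (hφ : ContDiffAt 𝕜 n φ a) (hinj : Injective (fderiv 𝕜 φ a)) (hn : n ≠ 0) :
    ∃ χ : F → E, ContDiffAt 𝕜 n χ (φ a) ∧ ∀ᶠ z in 𝓝 a, χ (φ z) = z := by
  have : CompleteSpace E := FiniteDimensional.complete 𝕜 E
  obtain ⟨π, hπ⟩ :=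
    ContinuousLinearMap.HasLeftInverse.of_injective_of_finiteDimensional_domain hinj
  have hπφ : ContDiffAt 𝕜 n (π ∘ φ) a := π.contDiff.contDiffAt.comp a hφ
  have hderiv : HasFDerivAt (π ∘ φ) ((ContinuousLinearEquiv.refl 𝕜 E : E →L[𝕜] E)) a := by
    convert π.hasFDerivAt.comp a (hφ.differentiableAt hn).hasFDerivAt
    ext x
    exact (hπ _).symm
  refine ⟨hπφ.localInverse hderiv hn ∘ π, ?_, ?_⟩
  · exact (hπφ.to_localInverse hderiv hn).comp (φ a) π.contDiff.contDiffAt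
  · exact (hπφ.hasStrictFDerivAt' hderiv hn).eventually_left_inverse

lemma ContDiffAt.of_comp_of_injective_fderiv {φ : E → F} {g : G → E} {p : G}
    (hφ : ContDiffAt 𝕜 n φ (g p)) (hinj : Injective (fderiv 𝕜 φ (g p))) (hn : n ≠ 0)
    (hg : ContinuousAt g p) (hφg : ContDiffAt 𝕜 n (φ ∘ g) p) : ContDiffAt 𝕜 n g p := by
  obtain ⟨χ, hχ, hχφ⟩ := hφ.exists_eventually_leftInverse_of_injective_fderiv hinj hn
  have hg_eq : g =ᶠ[𝓝 p] χ ∘ (φ ∘ g) := (hg.eventually hχφ).mono fun _ h => h.symm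
  exact (hχ.comp p hφg).congr_of_eventuallyEq hg_eq

lemma ContDiffOn.of_comp_of_injective_fderivWithin {φ : E → F} {g : G → E} {O : Set E}
    {D : Set G} (hO : IsOpen O) (hD : IsOpen D) (hφ : ContDiffOn 𝕜 n φ O)
    (hinj : ∀ z ∈ O, Injective (fderivWithin 𝕜 φ O z)) (hn : n ≠ 0) (hgD : MapsTo g D O)
    (hg : ContinuousOn g D) (hφg : ContDiffOn 𝕜 n (φ ∘ g) D) : ContDiffOn 𝕜 n g D := by
  intro p hp
  have hgp : O ∈ 𝓝 (g p) := hO.mem_nhds (hgD hp)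
  refine ContDiffAt.contDiffWithinAt (ContDiffAt.of_comp_of_injective_fderiv
    (hφ.contDiffAt hgp) ?_ hn (hg.continuousAt (hD.mem_nhds hp))
    (hφg.contDiffAt (hD.mem_nhds hp)))
  simpa only [fderivWithin_of_mem_nhds hgp] using hinj _ (hgD hp)

end Immersion

section Transition

variable {E W : Type*} {O₁ O₂ : Set E} {X : Set W} {φ₁ φ₂ : E → W} {ψ₁ ψ₂ : W → E}

lemma mapsTo_comp_inter_preimage (hinv₁ : LeftInvOn ψ₁ φ₁ O₁) (hX : X ⊆ φ₁ '' O₁) :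
    MapsTo (ψ₁ ∘ φ₂) (O₂ ∩ φ₂ ⁻¹' X) (O₁ ∩ φ₁ ⁻¹' X) := by
  rintro z ⟨-, hzX⟩
  refine ⟨hinv₁.mapsTo (surjOn_image φ₁ O₁) (hX hzX), ?_⟩
  show φ₁ (ψ₁ (φ₂ z)) ∈ X
  rwa [hinv₁.rightInvOn_image (hX hzX)]

lemma leftInvOn_comp_inter_preimage (hinv₁ : LeftInvOn ψ₁ φ₁ O₁) (hinv₂ : LeftInvOn ψ₂ φ₂ O₂)
    (hX : X ⊆ φ₁ '' O₁) : LeftInvOn (ψ₂ ∘ φ₁) (ψ₁ ∘ φ₂) (O₂ ∩ φ₂ ⁻¹' X) := by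
  rintro z ⟨hz, hzX⟩
  simp only [comp_apply, hinv₁.rightInvOn_image (hX hzX), hinv₂ hz]

lemma isOpen_inter_preimage_inter [TopologicalSpace E] [TopologicalSpace W] {O : Set E}
    {U S : Set W} {φ : E → W} (hO : IsOpen O) (hU : IsOpen U) (hφ : ContinuousOn φ O)
    (hS : MapsTo φ O S) : IsOpen (O ∩ φ ⁻¹' (U ∩ S)) := by
  rw [preimage_inter, inter_comm (φ ⁻¹' U), ← inter_assoc,
    inter_eq_left.mpr (show O ⊆ φ ⁻¹' S from hS)]
  exact hφ.isOpen_inter_preimage hO hU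

lemma contDiffOn_comp_inter_preimage {𝕜 : Type*} [RCLike 𝕜] [NormedAddCommGroup E]
    [NormedSpace 𝕜 E] [FiniteDimensional 𝕜 E] [NormedAddCommGroup W] [NormedSpace 𝕜 W]
    {n : WithTop ℕ∞} (hn : n ≠ 0) (hO₁ : IsOpen O₁) (hD : IsOpen (O₂ ∩ φ₂ ⁻¹' X))
    (hφ₁ : ContDiffOn 𝕜 n φ₁ O₁) (hφ₂ : ContDiffOn 𝕜 n φ₂ O₂)
    (hder₁ : ∀ z ∈ O₁, Injective (fderivWithin 𝕜 φ₁ O₁ z)) (hinv₁ : LeftInvOn ψ₁ φ₁ O₁)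
    (hψ₁ : ContinuousOn ψ₁ (φ₁ '' O₁)) (hX : X ⊆ φ₁ '' O₁) :
    ContDiffOn 𝕜 n (ψ₁ ∘ φ₂) (O₂ ∩ φ₂ ⁻¹' X) := by
  refine hφ₁.of_comp_of_injective_fderivWithin hO₁ hD hder₁ hn
    ((mapsTo_comp_inter_preimage hinv₁ hX).mono_right inter_subset_left) ?_ ?_
  · exact hψ₁.comp (hφ₂.continuousOn.mono inter_subset_left) fun z hz => hX hz.2
  · exact (hφ₂.mono inter_subset_left).congr fun z hz => hinv₁.rightInvOn_image (hX hz.2)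

end Transition

theorem transition_map_diffeomorphism_general
    {W : Type*} [NormedAddCommGroup W] [NormedSpace ℝ W]
    (m : ℕ) (k : ℕ∞) (hk : 1 ≤ k) (M : Set W)
    (O₁ O₂ : Set (EuclideanSpace ℝ (Fin m))) (U₁ U₂ : Set W)
    (φ₁ φ₂ : EuclideanSpace ℝ (Fin m) → W)
    (ψ₁ ψ₂ : W → EuclideanSpace ℝ (Fin m))
    (hO₁ : IsOpen O₁) (hO₂ : IsOpen O₂) (hU₁ : IsOpen U₁) (hU₂ : IsOpen U₂)
    -- φᵢ are C^k parametrizations of M: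
    (hφ₁ : ContDiffOn ℝ k φ₁ O₁) (hφ₂ : ContDiffOn ℝ k φ₂ O₂)
    (himg₁ : φ₁ '' O₁ = U₁ ∩ M) (himg₂ : φ₂ '' O₂ = U₂ ∩ M)
    -- with continuous inverses ψᵢ (homeomorphism onto the image):
    (hinv₁ : ∀ z ∈ O₁, ψ₁ (φ₁ z) = z) (hinv₂ : ∀ z ∈ O₂, ψ₂ (φ₂ z) = z)
    (hψ₁ : ContinuousOn ψ₁ (U₁ ∩ M)) (hψ₂ : ContinuousOn ψ₂ (U₂ ∩ M))
    -- and injective derivatives: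
    (hder₁ : ∀ z ∈ O₁, Function.Injective (fderivWithin ℝ φ₁ O₁ z))
    (hder₂ : ∀ z ∈ O₂, Function.Injective (fderivWithin ℝ φ₂ O₂ z)) :
    -- the domains of the transition maps are open:
    IsOpen (O₁ ∩ φ₁ ⁻¹' (U₁ ∩ U₂ ∩ M)) ∧ IsOpen (O₂ ∩ φ₂ ⁻¹' (U₁ ∩ U₂ ∩ M)) ∧
    -- φ₁⁻¹ ∘ φ₂ maps φ₂⁻¹(X) bijectively onto φ₁⁻¹(X), with C^k inverse φ₂⁻¹ ∘ φ₁: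
    Set.BijOn (ψ₁ ∘ φ₂) (O₂ ∩ φ₂ ⁻¹' (U₁ ∩ U₂ ∩ M)) (O₁ ∩ φ₁ ⁻¹' (U₁ ∩ U₂ ∩ M)) ∧
    (∀ z ∈ O₂ ∩ φ₂ ⁻¹' (U₁ ∩ U₂ ∩ M), (ψ₂ ∘ φ₁) ((ψ₁ ∘ φ₂) z) = z) ∧
    (∀ z ∈ O₁ ∩ φ₁ ⁻¹' (U₁ ∩ U₂ ∩ M), (ψ₁ ∘ φ₂) ((ψ₂ ∘ φ₁) z) = z) ∧
    ContDiffOn ℝ k (ψ₁ ∘ φ₂) (O₂ ∩ φ₂ ⁻¹' (U₁ ∩ U₂ ∩ M)) ∧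
    ContDiffOn ℝ k (ψ₂ ∘ φ₁) (O₁ ∩ φ₁ ⁻¹' (U₁ ∩ U₂ ∩ M)) := by
  have hk₀ : (k : WithTop ℕ∞) ≠ 0 := by exact_mod_cast (zero_lt_one.trans_le hk).ne'
  have hX₁ : U₁ ∩ U₂ ∩ M ⊆ φ₁ '' O₁ := himg₁ ▸ fun x hx => ⟨hx.1.1, hx.2⟩
  have hX₂ : U₁ ∩ U₂ ∩ M ⊆ φ₂ '' O₂ := himg₂ ▸ fun x hx => ⟨hx.1.2, hx.2⟩
  have hD₁ : IsOpen (O₁ ∩ φ₁ ⁻¹' (U₁ ∩ U₂ ∩ M)) := by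
    rw [inter_assoc, inter_left_comm]
    exact isOpen_inter_preimage_inter hO₁ hU₂ hφ₁.continuousOn (himg₁ ▸ mapsTo_image φ₁ O₁)
  have hD₂ : IsOpen (O₂ ∩ φ₂ ⁻¹' (U₁ ∩ U₂ ∩ M)) := by
    rw [inter_assoc]
    exact isOpen_inter_preimage_inter hO₂ hU₁ hφ₂.continuousOn (himg₂ ▸ mapsTo_image φ₂ O₂)
  have hleft₂ := leftInvOn_comp_inter_preimage hinv₁ hinv₂ hX₁
  have hleft₁ := leftInvOn_comp_inter_preimage hinv₂ hinv₁ hX₂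
  refine ⟨hD₁, hD₂, InvOn.bijOn ⟨hleft₂, hleft₁⟩ (mapsTo_comp_inter_preimage hinv₁ hX₁)
    (mapsTo_comp_inter_preimage hinv₂ hX₂), fun z hz => hleft₂ hz, fun z hz => hleft₁ hz, ?_, ?_⟩
  · exact contDiffOn_comp_inter_preimage hk₀ hO₁ hD₂ hφ₁ hφ₂ hder₁ hinv₁ (himg₁ ▸ hψ₁) hX₁
  · exact contDiffOn_comp_inter_preimage hk₀ hO₂ hD₁ hφ₂ hφ₁ hder₂ hinv₂ (himg₂ ▸ hψ₂) hX₂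

/-- Change of parametrization: given two local `C^k`-parametrizations
`φ₁ : O₁ → U₁ ∩ M`, `φ₂ : O₂ → U₂ ∩ M` of an `m`-dimensional `C^k`-submanifold
`M` of a Banach space `W` with `X := U₁ ∩ U₂ ∩ M ≠ ∅`, the transition map
`φ₁⁻¹ ∘ φ₂` is a `C^k`-diffeomorphism from `φ₂⁻¹(X)` onto `φ₁⁻¹(X)`. -/
theorem transition_map_diffeomorphism
    {W : Type*} [NormedAddCommGroup W] [NormedSpace ℝ W]
    (m : ℕ) (k : ℕ∞) (hk : 1 ≤ k) (M : Set W)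
    (O₁ O₂ : Set (EuclideanSpace ℝ (Fin m))) (U₁ U₂ : Set W)
    (φ₁ φ₂ : EuclideanSpace ℝ (Fin m) → W)
    (ψ₁ ψ₂ : W → EuclideanSpace ℝ (Fin m))
    (hO₁ : IsOpen O₁) (hO₂ : IsOpen O₂) (hU₁ : IsOpen U₁) (hU₂ : IsOpen U₂)
    -- φᵢ are C^k parametrizations of M:
    (hφ₁ : ContDiffOn ℝ k φ₁ O₁) (hφ₂ : ContDiffOn ℝ k φ₂ O₂)
    (himg₁ : φ₁ '' O₁ = U₁ ∩ M) (himg₂ : φ₂ '' O₂ = U₂ ∩ M)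
    -- with continuous inverses ψᵢ (homeomorphism onto the image):
    (hinv₁ : ∀ z ∈ O₁, ψ₁ (φ₁ z) = z) (hinv₂ : ∀ z ∈ O₂, ψ₂ (φ₂ z) = z)
    (hψ₁ : ContinuousOn ψ₁ (U₁ ∩ M)) (hψ₂ : ContinuousOn ψ₂ (U₂ ∩ M))
    -- and injective derivatives:
    (hder₁ : ∀ z ∈ O₁, Function.Injective (fderivWithin ℝ φ₁ O₁ z))
    (hder₂ : ∀ z ∈ O₂, Function.Injective (fderivWithin ℝ φ₂ O₂ z))
    (hX : (U₁ ∩ U₂ ∩ M).Nonempty) :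
    -- the domains of the transition maps are open:
    IsOpen (O₁ ∩ φ₁ ⁻¹' (U₁ ∩ U₂ ∩ M)) ∧ IsOpen (O₂ ∩ φ₂ ⁻¹' (U₁ ∩ U₂ ∩ M)) ∧
    -- φ₁⁻¹ ∘ φ₂ maps φ₂⁻¹(X) bijectively onto φ₁⁻¹(X), with C^k inverse φ₂⁻¹ ∘ φ₁:
    Set.BijOn (ψ₁ ∘ φ₂) (O₂ ∩ φ₂ ⁻¹' (U₁ ∩ U₂ ∩ M)) (O₁ ∩ φ₁ ⁻¹' (U₁ ∩ U₂ ∩ M)) ∧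
    (∀ z ∈ O₂ ∩ φ₂ ⁻¹' (U₁ ∩ U₂ ∩ M), (ψ₂ ∘ φ₁) ((ψ₁ ∘ φ₂) z) = z) ∧
    (∀ z ∈ O₁ ∩ φ₁ ⁻¹' (U₁ ∩ U₂ ∩ M), (ψ₁ ∘ φ₂) ((ψ₂ ∘ φ₁) z) = z) ∧
    ContDiffOn ℝ k (ψ₁ ∘ φ₂) (O₂ ∩ φ₂ ⁻¹' (U₁ ∩ U₂ ∩ M)) ∧
    ContDiffOn ℝ k (ψ₂ ∘ φ₁) (O₁ ∩ φ₁ ⁻¹' (U₁ ∩ U₂ ∩ M)) :=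
  transition_map_diffeomorphism_general m k hk M O₁ O₂ U₁ U₂ φ₁ φ₂ ψ₁ ψ₂ hO₁ hO₂ hU₁ hU₂ hφ₁ hφ₂
    himg₁ himg₂ hinv₁ hinv₂ hψ₁ hψ₂ hder₁ hder₂
end

section
/- Let X be a controlled rough path Z with values in E satisfying Z' = g(Z), and Y a controlled rough path in W satisfying Y' = f(Y), with Y = φ(Z) for φ ∈ C³_b(E, W), where X is truly rough. Then the second-order Gubinelli derivative decomposes as Df(Y)f(Y) = Dφ(Z) Dg(Z) g(Z) + D²φ(Z)(g(Z), g(Z)) as paths with values in L(V, L(V, W)) (equivalently L(V ⊗ V, W)). -/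
/-!
By the chain rule for controlled paths, `Dφ(Z) g(Z)` is a Gubinelli derivative of `Y = φ(Z)`.
True roughness makes Gubinelli derivatives unique, so `f(Y) = ψ(Z)` with `ψ = Dφ · g`, a `C²_b`
map by the Leibniz rule. A second application of the chain rule exhibits `Df(Y) f(Y)` and
`Dψ(Z) g(Z)` as Gubinelli derivatives of this same path, so they agree, and the product rule
`Dψ(z) h = Dφ(z) ∘ Dg(z) h + D²φ(z) h ∘ g(z)` gives the decomposition.
-/

open Filter Topology Set

/-- `(Y, Y')` is a rough path controlled by `X` on `[0,T]` with Hölder exponent `α`: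
`Y` and `Y'` are `α`-Hölder on `[0,T]` and the Gubinelli remainder
`Y_{s,t} − Y'_s X_{s,t}` is `2α`-Hölder. -/
def IsControlledBy {V W : Type*} [NormedAddCommGroup V] [NormedSpace ℝ V]
    [NormedAddCommGroup W] [NormedSpace ℝ W]
    (α T : ℝ) (X : ℝ → V) (Y : ℝ → W) (Y' : ℝ → V →L[ℝ] W) : Prop :=
  (∃ C, ∀ s ∈ Icc (0:ℝ) T, ∀ t ∈ Icc (0:ℝ) T, ‖Y t - Y s‖ ≤ C * |t - s| ^ α) ∧
  (∃ C, ∀ s ∈ Icc (0:ℝ) T, ∀ t ∈ Icc (0:ℝ) T, ‖Y' t - Y' s‖ ≤ C * |t - s| ^ α) ∧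
  (∃ C, ∀ s ∈ Icc (0:ℝ) T, ∀ t ∈ Icc (0:ℝ) T,
    ‖Y t - Y s - Y' s (X t - X s)‖ ≤ C * |t - s| ^ (2 * α))

/-- `X` is truly rough on `[0,T)`: there is a dense subset `D` of `[0,T)` such that
for every `s ∈ D` and every nonzero continuous functional `v`,
`limsup_{t ↓ s} |v(X_{s,t})| / |t−s|^{2α} = ∞`. -/
def TrulyRough {V : Type*} [NormedAddCommGroup V] [NormedSpace ℝ V]
    (α T : ℝ) (X : ℝ → V) : Prop :=
  ∃ D ⊆ Ico (0:ℝ) T, (Ico (0:ℝ) T ⊆ closure D) ∧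
    ∀ s ∈ D, ∀ v : V →L[ℝ] ℝ, v ≠ 0 →
      ∀ M : ℝ, ∃ᶠ t in 𝓝[>] s, M * |t - s| ^ (2 * α) ≤ |v (X t - X s)|

section Calculus

variable {E G : Type*} [NormedAddCommGroup E] [NormedSpace ℝ E]
  [NormedAddCommGroup G] [NormedSpace ℝ G]

-- Together with `ContDiff ℝ n F`, this is the class `C^n_b` of the paper.
def BoundedIteratedFDeriv (n : ℕ) (F : E → G) : Prop :=
  ∀ i : ℕ, i ≤ n → ∃ C, ∀ x, ‖iteratedFDeriv ℝ i F x‖ ≤ C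

lemma BoundedIteratedFDeriv.exists_uniform_bound {n : ℕ} {F : E → G}
    (hF : BoundedIteratedFDeriv n F) :
    ∃ C, ∀ i ≤ n, ∀ x, ‖iteratedFDeriv ℝ i F x‖ ≤ C := by
  induction n with
  | zero => simpa using hF 0 le_rfl
  | succ n ih =>
    obtain ⟨C, hC⟩ := ih fun i hi => hF i (hi.trans n.le_succ)
    obtain ⟨C', hC'⟩ := hF (n + 1) le_rfl
    refine ⟨max C C', fun i hi x => ?_⟩
    rcases hi.lt_or_eq with hi | rfl
    · exact (hC i (Nat.lt_succ_iff.mp hi) x).trans (le_max_left _ _)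
    · exact (hC' x).trans (le_max_right _ _)

lemma BoundedIteratedFDeriv.fderiv {n : ℕ} {F : E → G} (hF : BoundedIteratedFDeriv (n + 1) F) :
    BoundedIteratedFDeriv n (fderiv ℝ F) := fun i hi => by
  simpa only [norm_iteratedFDeriv_fderiv] using hF (i + 1) (by omega)

lemma BoundedIteratedFDeriv.clm_comp {H K : Type*} [NormedAddCommGroup H] [NormedSpace ℝ H]
    [NormedAddCommGroup K] [NormedSpace ℝ K] {n : ℕ} {u : E → H →L[ℝ] K} {v : E → G →L[ℝ] H}
    (hu : ContDiff ℝ n u) (hv : ContDiff ℝ n v)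
    (hub : BoundedIteratedFDeriv n u) (hvb : BoundedIteratedFDeriv n v) :
    BoundedIteratedFDeriv n (fun x => (u x).comp (v x)) := by
  obtain ⟨Cu, hCu⟩ := hub.exists_uniform_bound
  obtain ⟨Cv, hCv⟩ := hvb.exists_uniform_bound
  refine fun k hk => ⟨∑ i ∈ Finset.range (k + 1), (k.choose i : ℝ) * Cu * Cv, fun x => ?_⟩
  have hLeibniz := (ContinuousLinearMap.compL ℝ G H K).norm_iteratedFDeriv_le_of_bilinear_of_le_one
    hu hv x (n := k) (by exact_mod_cast hk) (ContinuousLinearMap.norm_compL_le ℝ G H K)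
  refine hLeibniz.trans (Finset.sum_le_sum fun i hi => ?_)
  have hi : i ≤ k := Nat.lt_succ_iff.mp (Finset.mem_range.mp hi)
  have hCu0 : 0 ≤ Cu := (norm_nonneg _).trans (hCu i (hi.trans hk) x)
  gcongr
  · exact hCu i (hi.trans hk) x
  · exact hCv (k - i) (by omega) x

lemma norm_image_sub_le_of_norm_iteratedFDeriv_one_le {F : E → G} (hF : Differentiable ℝ F)
    {K : ℝ} (hK : ∀ x, ‖iteratedFDeriv ℝ 1 F x‖ ≤ K) (x y : E) :
    ‖F x - F y‖ ≤ K * ‖x - y‖ :=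
  convex_univ.norm_image_sub_le_of_norm_fderiv_le (fun z _ => hF z)
    (fun z _ => norm_iteratedFDeriv_one (𝕜 := ℝ) F ▸ hK z) trivial trivial

lemma norm_fderiv_sub_fderiv_le {F : E → G} (hF : ContDiff ℝ 2 F)
    {K : ℝ} (hK : ∀ x, ‖iteratedFDeriv ℝ 2 F x‖ ≤ K) (x y : E) :
    ‖fderiv ℝ F x - fderiv ℝ F y‖ ≤ K * ‖x - y‖ :=
  norm_image_sub_le_of_norm_iteratedFDeriv_one_le
    ((hF.fderiv_right (m := 1) le_rfl).differentiable one_ne_zero)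
    (fun z => (norm_iteratedFDeriv_fderiv (n := 1)).trans_le (hK z)) x y

lemma norm_image_sub_sub_fderiv_le {F : E → G} (hF : ContDiff ℝ 2 F)
    {K : ℝ} (hK : ∀ x, ‖iteratedFDeriv ℝ 2 F x‖ ≤ K) (a b : E) :
    ‖F b - F a - fderiv ℝ F a (b - a)‖ ≤ K * ‖b - a‖ ^ 2 := by
  have hK0 : 0 ≤ K := (norm_nonneg _).trans (hK a)
  have h := (convex_segment a b).norm_image_sub_le_of_norm_fderiv_le' (C := K * ‖b - a‖)
    (fun x _ => (hF.differentiable two_ne_zero) x)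
    (fun x hx => (norm_fderiv_sub_fderiv_le hF hK x a).trans
      (mul_le_mul_of_nonneg_left (norm_sub_le_of_mem_segment hx) hK0))
    (left_mem_segment ℝ a b) (right_mem_segment ℝ a b)
  rwa [mul_assoc, ← sq] at h

end Calculus

lemma continuousOn_of_norm_sub_le_rpow {G : Type*} [SeminormedAddCommGroup G] {f : ℝ → G}
    {S : Set ℝ} {C α : ℝ} (hα : 0 < α)
    (h : ∀ s ∈ S, ∀ t ∈ S, ‖f t - f s‖ ≤ C * |t - s| ^ α) : ContinuousOn f S := by
  intro s hs
  have hbound : Continuous fun t : ℝ => C * |t - s| ^ α :=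
    continuous_const.mul ((continuous_abs.comp (continuous_sub_right s)).rpow_const
      fun _ => Or.inr hα.le)
  have hlim : Tendsto (fun t : ℝ => C * |t - s| ^ α) (𝓝[S] s) (𝓝 0) := by
    simpa [ContinuousWithinAt, Real.zero_rpow hα.ne'] using
      hbound.continuousWithinAt (s := S) (x := s)
  exact tendsto_iff_norm_sub_tendsto_zero.2 <|
    squeeze_zero' (Eventually.of_forall fun _ => norm_nonneg _)
      (eventually_mem_nhdsWithin.mono fun t ht => h s hs t ht) hlim

section ControlledPaths

variable {V W : Type*} [NormedAddCommGroup V] [NormedSpace ℝ V]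
  [NormedAddCommGroup W] [NormedSpace ℝ W] {α T : ℝ} {X : ℝ → V} {Y : ℝ → W}
  {Y' : ℝ → V →L[ℝ] W}

lemma IsControlledBy.continuousOn_deriv (h : IsControlledBy α T X Y Y') (hα : 0 < α) :
    ContinuousOn Y' (Icc 0 T) :=
  let ⟨_, hC⟩ := h.2.1
  continuousOn_of_norm_sub_le_rpow hα hC

lemma IsControlledBy.congr {Y₂ : ℝ → W} (h : IsControlledBy α T X Y Y')
    (hY : EqOn Y Y₂ (Icc 0 T)) : IsControlledBy α T X Y₂ Y' := by
  obtain ⟨⟨C, hC⟩, hY', ⟨R, hR⟩⟩ := h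
  refine ⟨⟨C, fun s hs t ht => ?_⟩, hY', ⟨R, fun s hs t ht => ?_⟩⟩
  · rw [← hY hs, ← hY ht]; exact hC s hs t ht
  · rw [← hY hs, ← hY ht]; exact hR s hs t ht

end ControlledPaths

section ChainRule

variable {V W G : Type*} [NormedAddCommGroup V] [NormedSpace ℝ V]
  [NormedAddCommGroup W] [NormedSpace ℝ W] [NormedAddCommGroup G] [NormedSpace ℝ G]
  {α T : ℝ} {X : ℝ → V} {Y : ℝ → W} {Y' : ℝ → V →L[ℝ] W}

lemma norm_comp_sub_comp_le (A A' : W →L[ℝ] G) (B B' : V →L[ℝ] W) :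
    ‖A.comp B - A'.comp B'‖ ≤ ‖A - A'‖ * ‖B‖ + ‖A'‖ * ‖B - B'‖ := by
  have hsplit : A.comp B - A'.comp B' = (A - A').comp B + A'.comp (B - B') := by
    rw [ContinuousLinearMap.sub_comp, ContinuousLinearMap.comp_sub]; abel
  rw [hsplit]
  exact (norm_add_le _ _).trans (add_le_add ((A - A').opNorm_comp_le B) (A'.opNorm_comp_le _))

theorem IsControlledBy.comp (h : IsControlledBy α T X Y Y') (hα : 0 < α) {F : W → G}
    (hF : ContDiff ℝ 2 F) (hFb : BoundedIteratedFDeriv 2 F) :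
    IsControlledBy α T X (fun t => F (Y t)) (fun t => (fderiv ℝ F (Y t)).comp (Y' t)) := by
  obtain ⟨M, hM⟩ := isCompact_Icc.exists_bound_of_continuousOn (h.continuousOn_deriv hα)
  obtain ⟨⟨C, hC⟩, ⟨C', hC'⟩, ⟨R, hR⟩⟩ := h
  obtain ⟨K₁, hK₁⟩ := hFb 1 (by norm_num)
  obtain ⟨K₂, hK₂⟩ := hFb 2 le_rfl
  have hDF : ∀ w, ‖fderiv ℝ F w‖ ≤ K₁ := fun w => norm_iteratedFDeriv_one (𝕜 := ℝ) F ▸ hK₁ w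
  have hK₁0 : 0 ≤ K₁ := (norm_nonneg _).trans (hDF 0)
  have hK₂0 : 0 ≤ K₂ := (norm_nonneg _).trans (hK₂ 0)
  refine ⟨⟨K₁ * C, fun s hs t ht => ?_⟩, ⟨K₂ * C * M + K₁ * C', fun s hs t ht => ?_⟩,
    ⟨K₂ * C ^ 2 + K₁ * R, fun s hs t ht => ?_⟩⟩
  · calc ‖F (Y t) - F (Y s)‖ ≤ K₁ * ‖Y t - Y s‖ :=
          norm_image_sub_le_of_norm_iteratedFDeriv_one_le (hF.differentiable two_ne_zero) hK₁ _ _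
      _ ≤ K₁ * (C * |t - s| ^ α) := by gcongr; exact hC s hs t ht
      _ = K₁ * C * |t - s| ^ α := by ring
  · have hM0 : 0 ≤ M := (norm_nonneg _).trans (hM t ht)
    calc ‖(fderiv ℝ F (Y t)).comp (Y' t) - (fderiv ℝ F (Y s)).comp (Y' s)‖
        ≤ ‖fderiv ℝ F (Y t) - fderiv ℝ F (Y s)‖ * ‖Y' t‖ + ‖fderiv ℝ F (Y s)‖ * ‖Y' t - Y' s‖ :=
          norm_comp_sub_comp_le _ _ _ _
      _ ≤ K₂ * ‖Y t - Y s‖ * M + K₁ * ‖Y' t - Y' s‖ := by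
          gcongr
          · exact norm_fderiv_sub_fderiv_le hF hK₂ _ _
          · exact hM t ht
          · exact hDF _
      _ ≤ K₂ * (C * |t - s| ^ α) * M + K₁ * (C' * |t - s| ^ α) := by
          gcongr
          · exact hC s hs t ht
          · exact hC' s hs t ht
      _ = (K₂ * C * M + K₁ * C') * |t - s| ^ α := by ring
  · have hsplit : F (Y t) - F (Y s) - (fderiv ℝ F (Y s)).comp (Y' s) (X t - X s)
        = (F (Y t) - F (Y s) - fderiv ℝ F (Y s) (Y t - Y s))
          + fderiv ℝ F (Y s) (Y t - Y s - Y' s (X t - X s)) := by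
      simp only [ContinuousLinearMap.comp_apply, map_sub]; abel
    rw [hsplit]
    calc _ ≤ ‖F (Y t) - F (Y s) - fderiv ℝ F (Y s) (Y t - Y s)‖
          + ‖fderiv ℝ F (Y s) (Y t - Y s - Y' s (X t - X s))‖ := norm_add_le _ _
      _ ≤ K₂ * ‖Y t - Y s‖ ^ 2 + K₁ * ‖Y t - Y s - Y' s (X t - X s)‖ :=
          add_le_add (norm_image_sub_sub_fderiv_le hF hK₂ _ _)
            (ContinuousLinearMap.le_of_opNorm_le _ (hDF _) _)
      _ ≤ K₂ * (C * |t - s| ^ α) ^ 2 + K₁ * (R * |t - s| ^ (2 * α)) := by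
          gcongr
          · exact hC s hs t ht
          · exact hR s hs t ht
      _ = (K₂ * C ^ 2 + K₁ * R) * |t - s| ^ (2 * α) := by
          rw [mul_pow, ← Real.rpow_mul_natCast (abs_nonneg _)]; push_cast; ring_nf

end ChainRule

section Uniqueness

variable {V W : Type*} [NormedAddCommGroup V] [NormedSpace ℝ V]
  [NormedAddCommGroup W] [NormedSpace ℝ W] {α T : ℝ} {X : ℝ → V}

lemma eq_zero_of_norm_apply_le_of_frequently_rough {s C : ℝ}
    (hrough : ∀ v : V →L[ℝ] ℝ, v ≠ 0 →
      ∀ M : ℝ, ∃ᶠ t in 𝓝[>] s, M * |t - s| ^ (2 * α) ≤ |v (X t - X s)|)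
    {L : V →L[ℝ] W} (hL : ∀ᶠ t in 𝓝[>] s, ‖L (X t - X s)‖ ≤ C * |t - s| ^ (2 * α)) :
    L = 0 := by
  -- If `L u ≠ 0` and `ψ` norms `L u`, then `ψ ∘ L` is a nonzero functional no larger than `L`.
  by_contra hL0
  obtain ⟨u, hu⟩ := DFunLike.ne_iff.mp hL0
  rw [zero_apply] at hu
  obtain ⟨ψ, hψ, hψu⟩ := exists_dual_vector ℝ (L u) (norm_ne_zero_iff.mpr hu)
  have hv : ψ.comp L ≠ 0 := by
    intro h
    have h0 : ψ (L u) = 0 := by simpa using congrArg (fun φ => φ u) h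
    exact hu (norm_eq_zero.mp (hψu.symm.trans h0))
  obtain ⟨t, hbig, hsmall, hts⟩ :=
    ((hrough _ hv (C + 1)).and_eventually (hL.and self_mem_nhdsWithin)).exists
  have hpos : 0 < |t - s| ^ (2 * α) :=
    Real.rpow_pos_of_pos (abs_pos.mpr (sub_ne_zero.mpr (ne_of_gt hts))) _
  have hψL : |(ψ.comp L) (X t - X s)| ≤ ‖L (X t - X s)‖ := by
    simpa [hψ] using ψ.le_opNorm (L (X t - X s))
  linarith

theorem IsControlledBy.eqOn_deriv_of_trulyRough {Y : ℝ → W} {Y₁ Y₂ : ℝ → V →L[ℝ] W}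
    (hα : 0 < α) (hT : 0 < T) (hX : TrulyRough α T X)
    (h₁ : IsControlledBy α T X Y Y₁) (h₂ : IsControlledBy α T X Y Y₂) :
    EqOn Y₁ Y₂ (Icc 0 T) := by
  obtain ⟨D, hDT, hDdense, hrough⟩ := hX
  obtain ⟨R₁, hR₁⟩ := h₁.2.2
  obtain ⟨R₂, hR₂⟩ := h₂.2.2
  have hD : EqOn Y₁ Y₂ D := fun s hs => by
    have hsT : s ∈ Icc 0 T := Ico_subset_Icc_self (hDT hs)
    have hnear : ∀ᶠ t in 𝓝[>] s, t ∈ Icc 0 T :=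
      mem_of_superset (Ioo_mem_nhdsGT (hDT hs).2)
        (Ioo_subset_Icc_self.trans (Icc_subset_Icc_left hsT.1))
    rw [← sub_eq_zero]
    refine eq_zero_of_norm_apply_le_of_frequently_rough (hrough s hs)
      (C := R₁ + R₂) (hnear.mono fun t ht => ?_)
    have hdiff : (Y₁ s - Y₂ s) (X t - X s)
        = (Y t - Y s - Y₂ s (X t - X s)) - (Y t - Y s - Y₁ s (X t - X s)) := by
      rw [sub_apply]; abel
    rw [hdiff]
    linarith [norm_sub_le (Y t - Y s - Y₂ s (X t - X s)) (Y t - Y s - Y₁ s (X t - X s)),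
      hR₁ s hsT t ht, hR₂ s hsT t ht]
  exact hD.of_subset_closure (h₁.continuousOn_deriv hα) (h₂.continuousOn_deriv hα)
    (hDT.trans Ico_subset_Icc_self)
    ((closure_Ico hT.ne).symm.subset.trans (closure_minimal hDdense isClosed_closure))

end Uniqueness

lemma fderiv_fderiv_clm_comp_apply {E V W : Type*} [NormedAddCommGroup E] [NormedSpace ℝ E]
    [NormedAddCommGroup V] [NormedSpace ℝ V] [NormedAddCommGroup W] [NormedSpace ℝ W]
    {φ : E → W} {g : E → V →L[ℝ] E} {z : E}
    (hφ : DifferentiableAt ℝ (fderiv ℝ φ) z) (hg : DifferentiableAt ℝ g z) (h : E) (w : V) :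
    fderiv ℝ (fun x => (fderiv ℝ φ x).comp (g x)) z h w
      = fderiv ℝ φ z (fderiv ℝ g z h w) + fderiv ℝ (fderiv ℝ φ) z h (g z w) := by
  simp [fderiv_clm_comp hφ hg]

theorem gubinelli_second_derivative_decomposition_general
    {V W E : Type*} [NormedAddCommGroup V] [NormedSpace ℝ V]
    [NormedAddCommGroup W] [NormedSpace ℝ W]
    [NormedAddCommGroup E] [NormedSpace ℝ E]
    (α T : ℝ) (hα : α ∈ Set.Ioc (1/3 : ℝ) (1/2)) (hT : 0 < T)
    (X : ℝ → V) (hX : TrulyRough α T X)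
    (f : W → V →L[ℝ] W) (hf : ContDiff ℝ 2 f)
    (hfb : ∀ i : ℕ, i ≤ 2 → ∃ C, ∀ y, ‖iteratedFDeriv ℝ i f y‖ ≤ C)
    (g : E → V →L[ℝ] E) (hg : ContDiff ℝ 2 g)
    (hgb : ∀ i : ℕ, i ≤ 2 → ∃ C, ∀ z, ‖iteratedFDeriv ℝ i g z‖ ≤ C)
    (φ : E → W) (hφ : ContDiff ℝ 3 φ)
    (hφb : ∀ i : ℕ, i ≤ 3 → ∃ C, ∀ z, ‖iteratedFDeriv ℝ i φ z‖ ≤ C)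
    (Z : ℝ → E) (hZ : IsControlledBy α T X Z (fun t => g (Z t)))
    (Y : ℝ → W) (hY : IsControlledBy α T X Y (fun t => f (Y t)))
    (hYZ : ∀ t ∈ Icc (0:ℝ) T, Y t = φ (Z t)) :
    ∀ t ∈ Icc (0:ℝ) T, ∀ v w : V,
      (fderiv ℝ f (Y t) (f (Y t) v)) w
        = fderiv ℝ φ (Z t) ((fderiv ℝ g (Z t) (g (Z t) v)) w)
          + (fderiv ℝ (fderiv ℝ φ) (Z t) (g (Z t) v)) (g (Z t) w) := by
  have hα0 : 0 < α := by linarith [hα.1]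
  have hDφ : ContDiff ℝ 2 (fderiv ℝ φ) := hφ.fderiv_right le_rfl
  have hψ : ContDiff ℝ 2 fun z => (fderiv ℝ φ z).comp (g z) := hDφ.clm_comp hg
  have hψb : BoundedIteratedFDeriv 2 fun z => (fderiv ℝ φ z).comp (g z) :=
    .clm_comp hDφ hg (BoundedIteratedFDeriv.fderiv (n := 2) hφb) hgb
  have hφZ : IsControlledBy α T X Y fun t => (fderiv ℝ φ (Z t)).comp (g (Z t)) :=
    (hZ.comp hα0 (hφ.of_le (by norm_num)) fun i hi => hφb i (by omega)).congr
      fun t ht => (hYZ t ht).symm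
  have hfY : EqOn (fun t => f (Y t)) (fun t => (fderiv ℝ φ (Z t)).comp (g (Z t))) (Icc 0 T) :=
    hY.eqOn_deriv_of_trulyRough hα0 hT hX hφZ
  have hsecond := (hY.comp hα0 hf hfb).eqOn_deriv_of_trulyRough hα0 hT hX
    ((hZ.comp hα0 hψ hψb).congr hfY.symm)
  intro t ht v w
  rw [← fderiv_fderiv_clm_comp_apply (hDφ.differentiable two_ne_zero _)
    (hg.differentiable two_ne_zero _)]
  exact congrArg (fun L => L v w) (hsecond ht)

/-- Decomposition of the second-order Gubinelli derivative: if `X` is truly rough,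
`(Z, g(Z))` and `(Y, f(Y))` are controlled rough paths and `Y = φ(Z)`, then
`Df(Y)f(Y) = Dφ(Z) Dg(Z) g(Z) + D²φ(Z)(g(Z), g(Z))` in `L(V, L(V,W))`. -/
theorem gubinelli_second_derivative_decomposition
    {V W E : Type*} [NormedAddCommGroup V] [NormedSpace ℝ V]
    [NormedAddCommGroup W] [NormedSpace ℝ W] [CompleteSpace W]
    [NormedAddCommGroup E] [NormedSpace ℝ E] [CompleteSpace E]
    (α T : ℝ) (hα : α ∈ Set.Ioc (1/3 : ℝ) (1/2)) (hT : 0 < T)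
    (X : ℝ → V) (hX : TrulyRough α T X)
    (f : W → V →L[ℝ] W) (hf : ContDiff ℝ 2 f)
    (hfb : ∀ i : ℕ, i ≤ 2 → ∃ C, ∀ y, ‖iteratedFDeriv ℝ i f y‖ ≤ C)
    (g : E → V →L[ℝ] E) (hg : ContDiff ℝ 2 g)
    (hgb : ∀ i : ℕ, i ≤ 2 → ∃ C, ∀ z, ‖iteratedFDeriv ℝ i g z‖ ≤ C)
    (φ : E → W) (hφ : ContDiff ℝ 3 φ)
    (hφb : ∀ i : ℕ, i ≤ 3 → ∃ C, ∀ z, ‖iteratedFDeriv ℝ i φ z‖ ≤ C)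
    (Z : ℝ → E) (hZ : IsControlledBy α T X Z (fun t => g (Z t)))
    (Y : ℝ → W) (hY : IsControlledBy α T X Y (fun t => f (Y t)))
    (hYZ : ∀ t ∈ Icc (0:ℝ) T, Y t = φ (Z t)) :
    ∀ t ∈ Icc (0:ℝ) T, ∀ v w : V,
      (fderiv ℝ f (Y t) (f (Y t) v)) w
        = fderiv ℝ φ (Z t) ((fderiv ℝ g (Z t) (g (Z t) v)) w)
          + (fderiv ℝ (fderiv ℝ φ) (Z t) (g (Z t) v)) (g (Z t) w) :=
  gubinelli_second_derivative_decomposition_general α T hα hT X hX f hf hfb g hg hgb φ hφ hφb Z hZ Y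
    hY hYZ
end
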